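/- Sufficiency of the computed causes (instance): in the concrete autonomous-car model, the subsequence of σ1 consisting of exactly the cause actions, namely [drive I J, hack, drive J K, turn K] (the actions at the achievement-cause indices {0, 2, 3, 4}, omitting the non-cause action turn J), is executable from S0 = ⟨I, false, false⟩ and achieves the effect: (run [drive I J, hack, drive J K, turn K] S0).damaged = true. -/
import Mathlib


inductive Loc : Type
  | I | J | K
deriving DecidableEq

open Loc

def connected : Loc → Loc → Prop
  | I, J => True
  | J, I => True
  | J, K => True
  | K, J => True
  | _, _ => False

inductive Act : Type
  | drive (i j : Loc)
  | turn (i : Loc)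
  | hack
deriving DecidableEq

open Act

structure State : Type where
  pos : Loc
  corrupted : Bool
  damaged : Bool

def step : Act → State → State
  | drive _ j, s => ⟨j, s.corrupted, s.damaged⟩
  | turn _, s => ⟨s.pos, s.corrupted, s.corrupted || s.damaged⟩
  | hack, s => ⟨s.pos, true, s.damaged⟩

def poss : Act → State → Prop
  | drive i j, s => s.pos = i ∧ i ≠ j ∧ connected i j
  | turn i, s => s.pos = i
  | hack, _ => True

def run (l : List Act) (s : State) : State :=
  l.foldl (fun t a => step a t) s

def executable (l : List Act) (s : State) : Prop :=
  ∀ k : Fin l.length, poss (l.get k) (run (l.take k) s)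

def σ1 : List Act := [drive I J, turn J, hack, drive J K, turn K]

def S0 : State := ⟨I, false, false⟩

def S0star : State := ⟨I, true, false⟩

def AchCause : List Act → State → (State → Prop) → ℕ → Prop
  | l, s0, φ, i =>
    ∃ j, ∃ _h1 : 1 ≤ j, ∃ _h2 : j ≤ l.length,
      ¬ φ (run (l.take (j - 1)) s0) ∧
      (∀ k, j ≤ k → k ≤ l.length → φ (run (l.take k) s0)) ∧
      (i = j - 1 ∨
        AchCause (l.take (j - 1)) s0
          (fun s => φ (step (l.get ⟨j - 1, by omega⟩) s) ∧
            poss (l.get ⟨j - 1, by omega⟩) s) i)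
  termination_by l _ _ _ => l.length
  decreasing_by simp [List.length_take]; omega

/-- sufficiency of the computed causes: the subsequence of σ1 consisting
of exactly the cause actions is executable from S0 and achieves the effect. -/
theorem causes_sufficient :
    executable [Act.drive Loc.I Loc.J, Act.hack, Act.drive Loc.J Loc.K, Act.turn Loc.K] S0 ∧
    (run [Act.drive Loc.I Loc.J, Act.hack, Act.drive Loc.J Loc.K, Act.turn Loc.K] S0).damaged = true := by
  constructor
  · intro k
    fin_cases k <;> simp [poss, run, step, S0, connected, List.get]
  · rfl
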